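/- arXiv:2306.17687 — 3 statements merged into one kernel-verified Lean document; each statement's English description precedes it below -/
import Mathlib

section
/- Let Ξ be a Hausdorff locally compact abelian group which is not compact. Then for every ψ ∈ VO(Ξ) and every λ ∈ ⋂_{K ⊆ Ξ compact} closure(ψ(Ξ∖K)), there exists a unital ℂ-algebra homomorphism σ : VO(Ξ) → ℂ such that σ(φ) = 0 for every φ ∈ C_0(Ξ) and σ(ψ) = λ. (Every value of ψ clustering at infinity is attained by a character of VO(Ξ) lying in the corona.) -/
/-!
A value `lam` clustering at infinity is a limit of `ψ` along some ultrafilter `U` finer than the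
cocompact filter. Every function in `VO(Ξ)` has bounded range, hence converges along `U`, and
`f ↦ lim_U f` is then a unital algebra homomorphism that kills `C_0(Ξ)` and sends `ψ` to `lam`.
-/

open Filter

noncomputable section

/-- Bounded uniformly continuous complex functions on a uniform space. -/
def BCu {Ξ : Type*} [UniformSpace Ξ] (ψ : Ξ → ℂ) : Prop :=
  Bornology.IsBounded (Set.range ψ) ∧ UniformContinuous ψ

/-- Continuous complex functions vanishing at infinity. -/
def C0 {Ξ : Type*} [TopologicalSpace Ξ] (φ : Ξ → ℂ) : Prop :=
  Continuous φ ∧ Tendsto φ (cocompact Ξ) (nhds 0)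

/-- Translation of a function on a (multiplicative) abelian group: `(τ η ψ)(ξ) = ψ(ξη)`. -/
def tau {Ξ : Type*} [CommGroup Ξ] (η : Ξ) (ψ : Ξ → ℂ) : Ξ → ℂ :=
  fun ξ => ψ (ξ * η)

/-- Vanishing oscillation functions on `Ξ`. -/
def VO {Ξ : Type*} [CommGroup Ξ] [UniformSpace Ξ] (ψ : Ξ → ℂ) : Prop :=
  BCu ψ ∧ ∀ ζ : Ξ, C0 (fun ξ => ψ (ξ * ζ) - ψ ξ)

open Topology Set Bornology

theorem mapClusterPt_cocompact_iff_forall_mem_closure {X Y : Type*} [TopologicalSpace X]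
    [TopologicalSpace Y] {f : X → Y} {y : Y} :
    MapClusterPt y (cocompact X) f ↔ ∀ K : Set X, IsCompact K → y ∈ closure (f '' Kᶜ) :=
  (hasBasis_cocompact.map f).clusterPt_iff_forall_mem_closure

theorem Ultrafilter.exists_tendsto_of_isBounded_range {X E : Type*} [PseudoMetricSpace E]
    [ProperSpace E] (U : Ultrafilter X) {f : X → E} (hf : IsBounded (range f)) :
    ∃ z, Tendsto f U (𝓝 z) := by
  obtain ⟨z, -, hz⟩ := hf.isCompact_closure.ultrafilter_le_nhds (U.map f)
    (le_principal_iff.2 (mem_of_superset range_mem_map subset_closure))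
  exact ⟨z, hz⟩

theorem VO.tendsto_limUnder {Ξ : Type*} [CommGroup Ξ] [UniformSpace Ξ] (U : Ultrafilter Ξ)
    {f : Ξ → ℂ} (hf : VO f) : Tendsto f U (𝓝 (limUnder (U : Filter Ξ) f)) :=
  tendsto_nhds_limUnder (U.exists_tendsto_of_isBounded_range hf.1.1)

theorem cluster_value_attained_by_corona_character_general
    (Ξ : Type*) [CommGroup Ξ] [UniformSpace Ξ]
    (ψ : Ξ → ℂ)
    (lam : ℂ)
    (hlam : ∀ K : Set Ξ, IsCompact K → lam ∈ closure (ψ '' Kᶜ)) :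
    ∃ σ : (Ξ → ℂ) → ℂ,
      (∀ ψ₁ ψ₂, VO ψ₁ → VO ψ₂ → σ (ψ₁ + ψ₂) = σ ψ₁ + σ ψ₂) ∧
      (∀ (c : ℂ) ψ₁, VO ψ₁ → σ (c • ψ₁) = c * σ ψ₁) ∧
      (∀ ψ₁ ψ₂, VO ψ₁ → VO ψ₂ → σ (ψ₁ * ψ₂) = σ ψ₁ * σ ψ₂) ∧
      σ 1 = 1 ∧
      (∀ φ : Ξ → ℂ, C0 φ → σ φ = 0) ∧
      σ ψ = lam := by
  obtain ⟨U, hU_cocompact, hUψ⟩ :=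
    mapClusterPt_iff_ultrafilter.1 (mapClusterPt_cocompact_iff_forall_mem_closure.2 hlam)
  refine ⟨limUnder (U : Filter Ξ), fun f g hf hg => ?_, fun c f hf => ?_, fun f g hf hg => ?_,
    tendsto_const_nhds.limUnder_eq, fun φ hφ => (hφ.2.mono_left hU_cocompact).limUnder_eq,
    hUψ.limUnder_eq⟩
  · exact ((hf.tendsto_limUnder U).add (hg.tendsto_limUnder U)).limUnder_eq
  · exact ((hf.tendsto_limUnder U).const_mul c).limUnder_eq
  · exact ((hf.tendsto_limUnder U).mul (hg.tendsto_limUnder U)).limUnder_eq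

theorem cluster_value_attained_by_corona_character
    (Ξ : Type*) [CommGroup Ξ] [UniformSpace Ξ] [IsUniformGroup Ξ]
    [LocallyCompactSpace Ξ] [T2Space Ξ]
    (hnc : ¬ CompactSpace Ξ)
    (ψ : Ξ → ℂ) (hψ : VO ψ)
    (lam : ℂ)
    (hlam : ∀ K : Set Ξ, IsCompact K → lam ∈ closure (ψ '' Kᶜ)) :
    ∃ σ : (Ξ → ℂ) → ℂ,
      (∀ ψ₁ ψ₂, VO ψ₁ → VO ψ₂ → σ (ψ₁ + ψ₂) = σ ψ₁ + σ ψ₂) ∧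
      (∀ (c : ℂ) ψ₁, VO ψ₁ → σ (c • ψ₁) = c * σ ψ₁) ∧
      (∀ ψ₁ ψ₂, VO ψ₁ → VO ψ₂ → σ (ψ₁ * ψ₂) = σ ψ₁ * σ ψ₂) ∧
      σ 1 = 1 ∧
      (∀ φ : Ξ → ℂ, C0 φ → σ φ = 0) ∧
      σ ψ = lam :=
  cluster_value_attained_by_corona_character_general Ξ ψ lam hlam
end
end

section
/- Let Z be a compact Hausdorff topological space, D ⊆ Z a dense subset, K ⊆ Z a closed subset, and φ : Z → ℂ a continuous function. Then φ(K) = ⋂ {closure(φ(N ∩ D)) : N ⊆ Z closed with K ⊆ interior(N)}, the intersection being taken over all closed neighborhoods N of K in Z. -/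
/-!
Every point of `K` lies in the interior of `N`, hence in the closure of `interior N ∩ D`, so
`φ '' K` lies in each of the sets. Conversely, a point `y ∉ φ '' K` is separated from the compact
set `φ '' K` by disjoint open sets `B ∋ y` and `A ⊇ φ '' K`; by normality `K` has a closed
neighbourhood `N ⊆ φ ⁻¹' A`, and then `φ '' N` avoids `B`, so `y ∉ closure (φ '' (N ∩ D))`.
-/

open Set

section

variable {Z Y : Type*} [TopologicalSpace Z] [TopologicalSpace Y]

lemma mem_closure_image_inter_of_mem_interior {D N : Set Z} (hD : Dense D) {φ : Z → Y}
    (hφ : Continuous φ) {x : Z} (hx : x ∈ interior N) : φ x ∈ closure (φ '' (N ∩ D)) := by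
  have hxD : x ∈ closure (interior N ∩ D) := hD.open_subset_closure_inter isOpen_interior hx
  exact closure_mono (image_mono (inter_subset_inter_left _ interior_subset))
    (image_closure_subset_closure_image hφ ⟨x, hxD, rfl⟩)

lemma exists_isClosed_subset_interior_notMem_closure_image [NormalSpace Z] [T2Space Y]
    {K : Set Z} (hK : IsClosed K) {φ : Z → Y} (hφ : Continuous φ) (hφK : IsCompact (φ '' K))
    {y : Y} (hy : y ∉ φ '' K) :
    ∃ N : Set Z, IsClosed N ∧ K ⊆ interior N ∧ y ∉ closure (φ '' N) := by
  obtain ⟨A, B, hA, hB, hKA, hyB, hAB⟩ :=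
    SeparatedNhds.of_isCompact_isCompact hφK isCompact_singleton (disjoint_singleton_right.2 hy)
  obtain ⟨U, hU, hKU, hUA⟩ :=
    normal_exists_closure_subset hK (hA.preimage hφ) (image_subset_iff.1 hKA)
  have hNB : closure (φ '' closure U) ⊆ Bᶜ :=
    closure_minimal ((image_subset_iff.2 hUA).trans hAB.subset_compl_right) hB.isClosed_compl
  exact ⟨closure U, isClosed_closure, hKU.trans (hU.subset_interior_iff.2 subset_closure),
    fun hy' => hNB hy' (hyB rfl)⟩

end

theorem image_closed_eq_iInter_closure_image_trace_on_dense
    (Z : Type*) [TopologicalSpace Z] [CompactSpace Z] [T2Space Z]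
    (D : Set Z) (hD : Dense D)
    (K : Set Z) (hK : IsClosed K)
    (φ : Z → ℂ) (hφ : Continuous φ) :
    φ '' K =
      ⋂₀ {S : Set ℂ | ∃ N : Set Z, IsClosed N ∧ K ⊆ interior N ∧
        S = closure (φ '' (N ∩ D))} := by
  refine Subset.antisymm ?_ fun y hy => ?_
  · rintro _ ⟨x, hxK, rfl⟩ S ⟨N, -, hKN, rfl⟩
    exact mem_closure_image_inter_of_mem_interior hD hφ (hKN hxK)
  · by_contra hyK
    obtain ⟨N, hN, hKN, hyN⟩ :=
      exists_isClosed_subset_interior_notMem_closure_image hK hφ (hK.isCompact.image hφ) hyK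
    exact hyN (closure_mono (image_mono inter_subset_left) (hy _ ⟨N, hN, hKN, rfl⟩))
end

section
/- Let Ξ be a Hausdorff locally compact abelian group (written multiplicatively) and let E ⊆ Ξ be nonempty. Define J_E := {ψ ∈ BC_u(Ξ) : for every ε > 0 there exists a compact set K ⊆ Ξ such that |ψ(ξ)| ≤ ε whenever ξ ∉ E·K}, where E·K := {ek : e ∈ E, k ∈ K}. Then J_E is a norm-closed, conjugation-closed, translation-invariant ideal of BC_u(Ξ) containing C_0(Ξ). Moreover, if E is not syndetic, i.e. E·K ≠ Ξ for every compact K ⊆ Ξ, then the constant function 1 does not belong to J_E, so J_E is a proper (non-unital) ideal. -/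
open Filter Pointwise

noncomputable section

/-- The ideal `J_E` of bounded uniformly continuous functions which are small outside
`E·K` for arbitrarily large compact sets `K`. -/
def JE {Ξ : Type*} [CommGroup Ξ] [UniformSpace Ξ] (E : Set Ξ) : Set (Ξ → ℂ) :=
  {ψ | BCu ψ ∧ ∀ ε > (0 : ℝ), ∃ K : Set Ξ, IsCompact K ∧ ∀ ξ : Ξ, ξ ∉ E * K → ‖ψ ξ‖ ≤ ε}

/-!
`J_E` consists of the bounded uniformly continuous functions tending to `0` along the filter
generated by the complements of the sets `E * K`, `K` compact. Each closure property is then a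
statement about limits along this filter: sums, scalar multiples and conjugates of null functions
are null, and so are products of a null function with a bounded one; right translation by `η`
maps the filter to itself since `E * K * {η⁻¹} = E * (K * {η⁻¹})`; for `e ∈ E` every compact `K`
lies in `E * (e⁻¹ K)`, so the filter is coarser than the cocompact filter and `C_0 ⊆ J_E`;
uniform limits preserve both uniform continuity and limits (Moore–Osgood); and the filter is
proper exactly when `E` is not syndetic, in which case `1` cannot tend to `0`.
-/

open Topology

namespace BCu

variable {X : Type*} [UniformSpace X] {ψ φ : X → ℂ}

lemma isBoundedUnder_norm (hψ : BCu ψ) (l : Filter X) :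
    IsBoundedUnder (· ≤ ·) l (norm ∘ ψ) := by
  obtain ⟨C, hC⟩ := isBounded_iff_forall_norm_le.mp hψ.1
  exact isBoundedUnder_of ⟨C, fun ξ => hC _ ⟨ξ, rfl⟩⟩

lemma comp_lipschitzWith {K : NNReal} {L : ℂ → ℂ} (hL : LipschitzWith K L) (hψ : BCu ψ) :
    BCu (L ∘ ψ) :=
  ⟨Set.range_comp L ψ ▸ hL.isBounded_image hψ.1, hL.uniformContinuous.comp hψ.2⟩

lemma comp_uniformContinuous {Y : Type*} [UniformSpace Y] {g : Y → X} (hg : UniformContinuous g)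
    (hψ : BCu ψ) : BCu (ψ ∘ g) :=
  ⟨hψ.1.subset (Set.range_comp_subset_range g ψ), hψ.2.comp hg⟩

lemma add (hψ : BCu ψ) (hφ : BCu φ) : BCu (ψ + φ) := by
  refine ⟨(isBounded_add hψ.1 hφ.1).subset ?_, hψ.2.add hφ.2⟩
  rintro _ ⟨ξ, rfl⟩
  exact Set.add_mem_add ⟨ξ, rfl⟩ ⟨ξ, rfl⟩

/-- Multiplication is uniformly continuous on the compact set
`closure (range ψ) ×ˢ closure (range φ)`, through which `ξ ↦ (ψ ξ, φ ξ)` factors. -/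
lemma mul (hψ : BCu ψ) (hφ : BCu φ) : BCu (ψ * φ) := by
  refine ⟨(isBounded_mul hψ.1 hφ.1).subset ?_, ?_⟩
  · rintro _ ⟨ξ, rfl⟩
    exact Set.mul_mem_mul ⟨ξ, rfl⟩ ⟨ξ, rfl⟩
  set B := closure (Set.range ψ) ×ˢ closure (Set.range φ)
  have hB : IsCompact B := hψ.1.isCompact_closure.prod hφ.1.isCompact_closure
  have hmul : UniformContinuous (B.domRestrict fun p : ℂ × ℂ => p.1 * p.2) :=
    uniformContinuousOn_iff_restrict.mp
      (hB.uniformContinuousOn_of_continuous continuous_mul.continuousOn)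
  have hpair : UniformContinuous fun ξ => (⟨(ψ ξ, φ ξ), subset_closure ⟨ξ, rfl⟩,
      subset_closure ⟨ξ, rfl⟩⟩ : B) :=
    (hψ.2.prodMk hφ.2).subtype_mk _
  exact hmul.comp hpair

end BCu

lemma C0.bcu {X : Type*} [UniformSpace X] {φ : X → ℂ} (hφ : C0 φ) : BCu φ :=
  let f : ZeroAtInftyContinuousMap X ℂ := ⟨⟨φ, hφ.1⟩, hφ.2⟩
  ⟨f.isBounded_range, ZeroAtInftyContinuousMap.uniformContinuous f⟩

section mulCocompact

variable {Ξ : Type*} [TopologicalSpace Ξ]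

def mulCocompact [Mul Ξ] (E : Set Ξ) : Filter Ξ :=
  Filter.comk (fun s : Set Ξ => ∃ K, IsCompact K ∧ s ⊆ E * K) ⟨∅, isCompact_empty, by simp⟩
    (fun _ ⟨K, hK, htK⟩ _ hst => ⟨K, hK, hst.trans htK⟩)
    (fun _ ⟨K, hK, hsK⟩ _ ⟨L, hL, htL⟩ =>
      ⟨K ∪ L, hK.union hL, (Set.union_subset_union hsK htL).trans Set.mul_union.symm.subset⟩)

lemma mem_mulCocompact [Mul Ξ] {E s : Set Ξ} :
    s ∈ mulCocompact E ↔ ∃ K, IsCompact K ∧ sᶜ ⊆ E * K :=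
  Iff.rfl

lemma mulCocompact_neBot_iff [Mul Ξ] {E : Set Ξ} :
    (mulCocompact E).NeBot ↔ ∀ K, IsCompact K → E * K ≠ Set.univ := by
  simp only [Filter.neBot_iff, Ne, ← Filter.empty_mem_iff_bot, mem_mulCocompact, Set.compl_empty,
    Set.univ_subset_iff, not_exists, not_and]

lemma tendsto_mulCocompact_nhds_zero_iff [Mul Ξ] {F : Type*} [SeminormedAddGroup F] {E : Set Ξ}
    {f : Ξ → F} :
    Tendsto f (mulCocompact E) (𝓝 0) ↔
      ∀ ε > (0 : ℝ), ∃ K, IsCompact K ∧ ∀ ξ, ξ ∉ E * K → ‖f ξ‖ ≤ ε := by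
  simp only [Metric.nhds_basis_closedBall.tendsto_right_iff, Filter.Eventually, mem_mulCocompact,
    Set.subset_def, Set.mem_compl_iff, Set.mem_ofPred_eq, mem_closedBall_zero_iff]
  exact forall₂_congr fun _ _ => exists_congr fun _ => and_congr_right' (forall_congr' fun _ =>
    not_imp_comm)

variable [Group Ξ] [ContinuousMul Ξ]

lemma mulCocompact_le_cocompact {E : Set Ξ} (hE : E.Nonempty) : mulCocompact E ≤ cocompact Ξ := by
  intro s hs
  obtain ⟨K, hK, hKs⟩ := mem_cocompact.mp hs
  obtain ⟨e, he⟩ := hE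
  refine ⟨(e⁻¹ * ·) '' K, hK.image (continuous_const_mul _), fun ξ hξ => ?_⟩
  have hξK : ξ ∈ K := by_contra fun h => hξ (hKs h)
  simpa using Set.mul_mem_mul he (Set.mem_image_of_mem (e⁻¹ * ·) hξK)

lemma tendsto_mul_const_mulCocompact (E : Set Ξ) (η : Ξ) :
    Tendsto (· * η) (mulCocompact E) (mulCocompact E) := by
  intro s hs
  obtain ⟨K, hK, hsK⟩ := mem_mulCocompact.mp hs
  refine ⟨(· * η⁻¹) '' K, hK.image (continuous_mul_const _), fun ξ hξ => ?_⟩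
  obtain ⟨e, he, k, hk, hek⟩ := hsK hξ
  exact ⟨e, he, k * η⁻¹, Set.mem_image_of_mem _ hk, by simp [← mul_assoc, hek]⟩

end mulCocompact

namespace BoundedContinuousFunction

lemma isClosed_setOf_uniformContinuous {α β : Type*} [UniformSpace α] [PseudoMetricSpace β] :
    IsClosed {f : α →ᵇ β | UniformContinuous f} := by
  refine isClosed_of_closure_subset fun f hf => ?_
  exact (tendsto_iff_tendstoUniformly.mp tendsto_id).uniformContinuous
    (mem_closure_iff_frequently.mp hf)

lemma isClosed_setOf_tendsto {α β : Type*} [TopologicalSpace α] [PseudoMetricSpace β]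
    (l : Filter α) (b : β) :
    IsClosed {f : α →ᵇ β | Tendsto f l (𝓝 b)} := by
  refine isClosed_of_closure_subset fun f hf => ?_
  set S := {g : α →ᵇ β | Tendsto g l (𝓝 b)}
  have : (𝓝[S] f).NeBot := mem_closure_iff_nhdsWithin_neBot.mp hf
  have hunif : TendstoUniformly (fun g : α →ᵇ β => ⇑g) f (𝓝[S] f) :=
    tendsto_iff_tendstoUniformly.mp (tendsto_id.mono_left nhdsWithin_le_nhds)
  exact hunif.tendsto_of_eventually_tendsto eventually_mem_nhdsWithin tendsto_const_nhds

end BoundedContinuousFunction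

lemma mem_JE_iff {Ξ : Type*} [CommGroup Ξ] [UniformSpace Ξ] {E : Set Ξ} {ψ : Ξ → ℂ} :
    ψ ∈ JE E ↔ BCu ψ ∧ Tendsto ψ (mulCocompact E) (𝓝 0) := by
  rw [tendsto_mulCocompact_nhds_zero_iff]
  rfl

theorem JE_is_admissible_ideal_general
    (Ξ : Type*) [CommGroup Ξ] [UniformSpace Ξ] [IsUniformGroup Ξ]
    (E : Set Ξ) (hE : E.Nonempty) :
    (∀ ψ ∈ JE E, BCu ψ) ∧
    (∀ ψ ∈ JE E, ∀ φ ∈ JE E, ψ + φ ∈ JE E) ∧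
    (∀ (c : ℂ), ∀ ψ ∈ JE E, c • ψ ∈ JE E) ∧
    IsClosed {φ : BoundedContinuousFunction Ξ ℂ | ⇑φ ∈ JE E} ∧
    (∀ ψ ∈ JE E, (fun ξ => starRingEnd ℂ (ψ ξ)) ∈ JE E) ∧
    (∀ ψ ∈ JE E, ∀ η : Ξ, tau η ψ ∈ JE E) ∧
    (∀ φ : Ξ → ℂ, BCu φ → ∀ j ∈ JE E, φ * j ∈ JE E) ∧
    (∀ φ : Ξ → ℂ, C0 φ → φ ∈ JE E) ∧
    ((∀ K : Set Ξ, IsCompact K → E * K ≠ Set.univ) → (1 : Ξ → ℂ) ∉ JE E) := by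
  simp only [mem_JE_iff]
  refine ⟨fun ψ hψ => hψ.1, ?_, ?_, ?_, ?_, ?_, ?_, ?_, ?_⟩
  · rintro ψ ⟨hψ, hψ0⟩ φ ⟨hφ, hφ0⟩
    exact ⟨hψ.add hφ, by rw [← add_zero (0 : ℂ)]; exact hψ0.add hφ0⟩
  · rintro c ψ ⟨hψ, hψ0⟩
    exact ⟨hψ.comp_lipschitzWith (lipschitzWith_smul c),
      by rw [← smul_zero c]; exact hψ0.const_smul c⟩
  · have hBCu : ∀ φ : BoundedContinuousFunction Ξ ℂ, BCu φ ↔ UniformContinuous φ :=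
      fun φ => and_iff_right φ.isBounded_range
    simp only [hBCu, Set.ofPred_and]
    exact BoundedContinuousFunction.isClosed_setOf_uniformContinuous.inter
      (BoundedContinuousFunction.isClosed_setOf_tendsto _ _)
  · rintro ψ ⟨hψ, hψ0⟩
    exact ⟨hψ.comp_lipschitzWith Complex.isometry_conj.lipschitz,
      by rw [← map_zero (starRingEnd ℂ)]; exact (Complex.continuous_conj.tendsto 0).comp hψ0⟩
  · rintro ψ ⟨hψ, hψ0⟩ η
    exact ⟨hψ.comp_uniformContinuous (uniformContinuous_id.mul uniformContinuous_const),
      hψ0.comp (tendsto_mul_const_mulCocompact E η)⟩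
  · rintro φ hφ j ⟨hj, hj0⟩
    exact ⟨hφ.mul hj, isBoundedUnder_le_mul_tendsto_zero (hφ.isBoundedUnder_norm _) hj0⟩
  · exact fun φ hφ => ⟨hφ.bcu, hφ.2.mono_left (mulCocompact_le_cocompact hE)⟩
  · rintro hsyndetic ⟨-, h1⟩
    have := mulCocompact_neBot_iff.mpr hsyndetic
    exact one_ne_zero (tendsto_nhds_unique tendsto_const_nhds h1)

theorem JE_is_admissible_ideal
    (Ξ : Type*) [CommGroup Ξ] [UniformSpace Ξ] [IsUniformGroup Ξ]
    [LocallyCompactSpace Ξ] [T2Space Ξ]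
    (E : Set Ξ) (hE : E.Nonempty) :
    (∀ ψ ∈ JE E, BCu ψ) ∧
    (∀ ψ ∈ JE E, ∀ φ ∈ JE E, ψ + φ ∈ JE E) ∧
    (∀ (c : ℂ), ∀ ψ ∈ JE E, c • ψ ∈ JE E) ∧
    IsClosed {φ : BoundedContinuousFunction Ξ ℂ | ⇑φ ∈ JE E} ∧
    (∀ ψ ∈ JE E, (fun ξ => starRingEnd ℂ (ψ ξ)) ∈ JE E) ∧
    (∀ ψ ∈ JE E, ∀ η : Ξ, tau η ψ ∈ JE E) ∧
    (∀ φ : Ξ → ℂ, BCu φ → ∀ j ∈ JE E, φ * j ∈ JE E) ∧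
    (∀ φ : Ξ → ℂ, C0 φ → φ ∈ JE E) ∧
    ((∀ K : Set Ξ, IsCompact K → E * K ≠ Set.univ) → (1 : Ξ → ℂ) ∉ JE E) :=
  JE_is_admissible_ideal_general Ξ E hE
end
end
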